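/- Let A(ρ_dg, ρ_cv) ∈ ℝ^{d×d} be Metzler, jointly linear (homogeneous of degree 1) in the concatenated parameter vector (ρ_dg, ρ_cv) ∈ ℝ^{n_dg}_{>0} × ℝ^{n_cv}_{>0}, and monotone nonincreasing in ρ_dg in the Metzler order (i.e., ρ_dg ≤ ρ_dg' entrywise implies A(ρ_dg', ρ_cv) ≤ A(ρ_dg, ρ_cv) entrywise). If A(𝟙, ρ_cv) is Hurwitz stable for every ρ_cv ∈ ℝ^{n_cv}_{>0}, then A(ρ_dg, ρ_cv) is Hurwitz stable for every (ρ_dg, ρ_cv) ∈ ℝ^{n_dg}_{>0} × ℝ^{n_cv}_{>0}. -/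

import Mathlib

/-!
Let `θ = minᵢ (ρ_dg)ᵢ`. Monotonicity gives `A(ρ_dg, ρ_cv) ≤ A(θ𝟙, ρ_cv) = θ A(𝟙, ρ_cv / θ)`
entrywise, and the right-hand side is Hurwitz stable, so it suffices that a Metzler matrix `M`
lying entrywise below a Hurwitz stable `N` is Hurwitz stable. For a large shift `s`, both
`M + s I` and `N + s I` are nonnegative and, as `σ(N)` is a compact subset of the open left
half-plane, `ρ(N + s I) < s`. An eigenpair `M x = μ x` with `Re μ ≥ 0` would give
`s |x| ≤ |μ + s| |x| ≤ (M + s I) |x| ≤ (N + s I) |x|`, whence `sᵏ ≤ ‖(N + s I)ᵏ‖` for all `k`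
and, by Gelfand's formula, `s ≤ ρ(N + s I)`.
-/

open Matrix

def Metzler {d : ℕ} (M : Matrix (Fin d) (Fin d) ℝ) : Prop :=
  ∀ i j, i ≠ j → 0 ≤ M i j

def HurwitzStable {d : ℕ} (M : Matrix (Fin d) (Fin d) ℝ) : Prop :=
  ∀ μ ∈ spectrum ℂ (M.map Complex.ofReal), μ.re < 0

open Filter

section BanachAlgebra

variable {A : Type*} [NormedRing A] [NormedAlgebra ℂ A] [CompleteSpace A]

theorem ofReal_le_spectralRadius_of_pow_le_norm_pow (a : A) {s : ℝ} (hs : 0 ≤ s)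
    (h : ∀ k : ℕ, s ^ k ≤ ‖a ^ k‖) : ENNReal.ofReal s ≤ spectralRadius ℂ a := by
  refine ge_of_tendsto (spectrum.pow_norm_pow_one_div_tendsto_nhds_spectralRadius a) ?_
  filter_upwards [eventually_ne_atTop 0] with k hk
  rw [one_div, ← Real.pow_rpow_inv_natCast hs hk]
  gcongr
  exact h k

theorem Complex.eventually_norm_ofReal_add_lt {K : Set ℂ} (hK : IsCompact K)
    (hneg : ∀ ν ∈ K, ν.re < 0) : ∀ᶠ s : ℝ in atTop, ∀ ν ∈ K, ‖(s : ℂ) + ν‖ < s := by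
  -- `‖s + ν‖ < s` iff `‖ν‖² / (-2 Re ν) < s`, and the left-hand side is bounded on `K`.
  obtain ⟨C, hC⟩ := hK.exists_bound_of_continuousOn (f := fun ν : ℂ => ‖ν‖ ^ 2 / (-2 * ν.re))
    (ContinuousOn.div (by fun_prop) (by fun_prop) fun ν hν => by linarith [hneg ν hν])
  filter_upwards [eventually_gt_atTop (max C 0)] with s hs ν hν
  have hre := hneg ν hν
  have hs0 : 0 < s := (le_max_right C 0).trans_lt hs
  have hν : ‖ν‖ ^ 2 < s * (-2 * ν.re) := by
    rw [← div_lt_iff₀ (by linarith)]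
    exact (le_abs_self _).trans (hC ν hν) |>.trans_lt ((le_max_left C 0).trans_lt hs)
  have hsq : ‖(s : ℂ) + ν‖ ^ 2 = s ^ 2 + 2 * s * ν.re + ‖ν‖ ^ 2 := by
    simp only [Complex.sq_norm, Complex.normSq_apply, Complex.add_re, Complex.add_im,
      Complex.ofReal_re, Complex.ofReal_im]
    ring
  exact (pow_lt_pow_iff_left₀ (norm_nonneg _) hs0.le two_ne_zero).1 (by nlinarith)

theorem eventually_spectralRadius_algebraMap_add_lt [Nontrivial A] {a : A}
    (ha : ∀ ν ∈ spectrum ℂ a, ν.re < 0) :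
    ∀ᶠ s : ℝ in atTop, spectralRadius ℂ (algebraMap ℂ A s + a) < ENNReal.ofReal s := by
  filter_upwards [Complex.eventually_norm_ofReal_add_lt (spectrum.isCompact a) ha,
    eventually_ge_atTop 0] with s hs hs0
  refine spectrum.spectralRadius_lt_of_forall_lt _ fun z hz => ?_
  rw [← spectrum.singleton_add_eq, Set.singleton_add] at hz
  obtain ⟨ν, hν, rfl⟩ := hz
  rw [← NNReal.coe_lt_coe, coe_nnnorm, Real.coe_toNNReal _ hs0]
  exact hs ν hν

end BanachAlgebra

namespace Matrix

variable {n : Type*} [Fintype n]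

theorem mulVec_le_mulVec_of_nonneg_left {R : Type*} [Semiring R] [PartialOrder R]
    [IsOrderedRing R] {Q : Matrix n n R} (hQ : ∀ i j, 0 ≤ Q i j) {u v : n → R} (huv : u ≤ v) :
    Q *ᵥ u ≤ Q *ᵥ v := fun i =>
  Finset.sum_le_sum fun j _ => mul_le_mul_of_nonneg_left (huv j) (hQ i j)

theorem mulVec_le_mulVec_of_nonneg_right {R : Type*} [Semiring R] [PartialOrder R]
    [IsOrderedRing R] {P Q : Matrix n n R} (hPQ : ∀ i j, P i j ≤ Q i j) {y : n → R}
    (hy : 0 ≤ y) : P *ᵥ y ≤ Q *ᵥ y := fun i =>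
  Finset.sum_le_sum fun j _ => mul_le_mul_of_nonneg_right (hPQ i j) (hy j)

theorem norm_mul_norm_le_mulVec_norm {P : Matrix n n ℝ} (hP : ∀ i j, 0 ≤ P i j) {x : n → ℂ}
    {μ : ℂ} (hx : P.map Complex.ofReal *ᵥ x = μ • x) (i : n) :
    ‖μ‖ * ‖x i‖ ≤ (P *ᵥ fun j => ‖x j‖) i :=
  calc ‖μ‖ * ‖x i‖ = ‖∑ j, (P i j : ℂ) * x j‖ := by
        rw [← norm_mul, ← smul_eq_mul, ← Pi.smul_apply, ← hx]; rfl
    _ ≤ ∑ j, ‖(P i j : ℂ) * x j‖ := norm_sum_le _ _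
    _ = (P *ᵥ fun j => ‖x j‖) i := by
        simp [mulVec, dotProduct, abs_of_nonneg (hP i _)]

variable [DecidableEq n]

theorem exists_mulVec_eq_smul_of_mem_spectrum {K : Type*} [Field K] {M : Matrix n n K} {μ : K}
    (hμ : μ ∈ spectrum K M) : ∃ x ≠ 0, M *ᵥ x = μ • x := by
  rw [← spectrum_toLin', ← Module.End.hasEigenvalue_iff_mem_spectrum] at hμ
  obtain ⟨x, hx⟩ := hμ.exists_hasEigenvector
  exact ⟨x, hx.2, by simpa using hx.apply_eq_smul⟩

theorem pow_smul_le_pow_mulVec {R : Type*} [CommSemiring R] [PartialOrder R] [IsOrderedRing R]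
    {Q : Matrix n n R} (hQ : ∀ i j, 0 ≤ Q i j) {s : R} (hs : 0 ≤ s) {y : n → R}
    (h : s • y ≤ Q *ᵥ y) (k : ℕ) : s ^ k • y ≤ (Q ^ k) *ᵥ y := by
  induction k with
  | zero => simp
  | succ k ih =>
    calc s ^ (k + 1) • y = s ^ k • s • y := by rw [pow_succ, mul_smul]
      _ ≤ s ^ k • Q *ᵥ y := smul_le_smul_of_nonneg_left h (pow_nonneg hs k)
      _ = Q *ᵥ (s ^ k • y) := (mulVec_smul Q (s ^ k) y).symm
      _ ≤ Q *ᵥ ((Q ^ k) *ᵥ y) := mulVec_le_mulVec_of_nonneg_left hQ ih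
      _ = (Q ^ (k + 1)) *ᵥ y := by rw [mulVec_mulVec, pow_succ']

section LinftyOpNorm

attribute [local instance] Matrix.linftyOpNormedRing Matrix.linftyOpNormedAlgebra

theorem linfty_opNorm_map_ofReal (M : Matrix n n ℝ) : ‖M.map Complex.ofReal‖ = ‖M‖ := by
  simp [linfty_opNorm_def]

theorem pow_le_linfty_opNorm_pow_of_smul_le_mulVec {Q : Matrix n n ℝ} (hQ : ∀ i j, 0 ≤ Q i j)
    {s : ℝ} (hs : 0 ≤ s) {y : n → ℝ} (hy : 0 ≤ y) (hy0 : y ≠ 0) (h : s • y ≤ Q *ᵥ y) (k : ℕ) :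
    s ^ k ≤ ‖Q ^ k‖ := by
  have hle : ‖s ^ k • y‖ ≤ ‖(Q ^ k) *ᵥ y‖ := by
    have hpow := pow_smul_le_pow_mulVec hQ hs h k
    refine (pi_norm_le_iff_of_nonneg (norm_nonneg _)).2 fun i => ?_
    rw [Real.norm_of_nonneg (smul_nonneg (pow_nonneg hs k) hy i)]
    exact (hpow i).trans ((Real.le_norm_self _).trans (norm_le_pi_norm _ i))
  rw [norm_smul, Real.norm_of_nonneg (pow_nonneg hs k)] at hle
  exact le_of_mul_le_mul_right (hle.trans (linfty_opNorm_mulVec _ _)) (norm_pos_iff.2 hy0)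

theorem ofReal_le_spectralRadius_of_smul_le_mulVec {Q : Matrix n n ℝ} (hQ : ∀ i j, 0 ≤ Q i j)
    {s : ℝ} (hs : 0 ≤ s) {y : n → ℝ} (hy : 0 ≤ y) (hy0 : y ≠ 0) (h : s • y ≤ Q *ᵥ y) :
    ENNReal.ofReal s ≤ spectralRadius ℂ (Q.map Complex.ofReal) := by
  refine ofReal_le_spectralRadius_of_pow_le_norm_pow _ hs fun k => ?_
  have hpow : Q.map Complex.ofReal ^ k = (Q ^ k).map Complex.ofReal :=
    (map_pow Complex.ofRealHom.mapMatrix Q k).symm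
  rw [hpow, linfty_opNorm_map_ofReal]
  exact pow_le_linfty_opNorm_pow_of_smul_le_mulVec hQ hs hy hy0 h k

end LinftyOpNorm

end Matrix

theorem Metzler.eventually_nonneg_add_smul_one {d : ℕ} {M : Matrix (Fin d) (Fin d) ℝ}
    (hM : Metzler M) : ∀ᶠ s : ℝ in atTop, ∀ i j, 0 ≤ (M + s • 1) i j := by
  filter_upwards [eventually_all.2 fun i => eventually_ge_atTop (-M i i)] with s hs i j
  rcases eq_or_ne i j with rfl | hij
  · simpa [neg_le_iff_add_nonneg'] using hs i
  · simpa [hij] using hM i j hij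

theorem HurwitzStable.smul {d : ℕ} {M : Matrix (Fin d) (Fin d) ℝ} (hM : HurwitzStable M) {c : ℝ}
    (hc : 0 < c) : HurwitzStable (c • M) := by
  intro μ hμ
  have hmap : (c • M).map Complex.ofReal =
      Units.mk0 (c : ℂ) (by exact_mod_cast hc.ne') • M.map Complex.ofReal := by
    ext i j; simp
  rw [hmap, spectrum.unit_smul_eq_smul] at hμ
  obtain ⟨ν, hν, rfl⟩ := hμ
  simpa using mul_neg_of_pos_of_neg hc (hM ν hν)

section

attribute [local instance] Matrix.linftyOpNormedRing Matrix.linftyOpNormedAlgebra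

theorem HurwitzStable.of_metzler_of_le {d : ℕ} {M N : Matrix (Fin d) (Fin d) ℝ}
    (hM : Metzler M) (hMN : ∀ i j, M i j ≤ N i j) (hN : HurwitzStable N) : HurwitzStable M := by
  intro μ hμ
  by_contra! hμre
  obtain ⟨x, hx0, hx⟩ := exists_mulVec_eq_smul_of_mem_spectrum hμ
  have : Nonempty (Fin d) := (Function.ne_iff.1 hx0).nonempty
  obtain ⟨s, hs, hP, hρ⟩ := ((eventually_gt_atTop 0).and (hM.eventually_nonneg_add_smul_one.and
    (eventually_spectralRadius_algebraMap_add_lt hN))).exists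
  have hPQ : ∀ i j, (M + s • 1) i j ≤ (N + s • 1) i j := fun i j => by simpa using hMN i j
  have hPx : (M + s • 1).map Complex.ofReal *ᵥ x = (μ + s) • x := by
    have : (M + s • 1).map Complex.ofReal = M.map Complex.ofReal + (s : ℂ) • 1 := by
      ext i j; rcases eq_or_ne i j with rfl | hij <;> simp [*]
    rw [this, add_mulVec, smul_mulVec, one_mulVec, hx, add_smul]
  set y : Fin d → ℝ := fun i => ‖x i‖
  have hy : 0 ≤ y := fun i => norm_nonneg _
  have hsy : s • y ≤ (N + s • 1) *ᵥ y := fun i =>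
    calc s * y i ≤ ‖μ + s‖ * y i := by
          gcongr
          simpa using (add_le_add_left hμre s).trans (Complex.re_le_norm (μ + s))
      _ ≤ ((M + s • 1) *ᵥ y) i := norm_mul_norm_le_mulVec_norm hP hPx i
      _ ≤ ((N + s • 1) *ᵥ y) i := mulVec_le_mulVec_of_nonneg_right hPQ hy i
  have hQ : (N + s • 1).map Complex.ofReal = algebraMap ℂ _ s + N.map Complex.ofReal := by
    ext i j; rcases eq_or_ne i j with rfl | hij <;> simp [*, algebraMap_matrix_apply, add_comm]
  have hy0 : y ≠ 0 := fun h => hx0 (funext fun i => norm_eq_zero.1 (congrFun h i))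
  have hsρ := ofReal_le_spectralRadius_of_smul_le_mulVec (fun i j => (hP i j).trans (hPQ i j))
    hs.le hy hy0 hsy
  rw [hQ] at hsρ
  exact hsρ.not_gt hρ

end

theorem stmt15_general {d ndg ncv : ℕ}
    (A : (Fin ndg → ℝ) → (Fin ncv → ℝ) → Matrix (Fin d) (Fin d) ℝ)
    (hMetz : ∀ ρdg ρcv, (∀ i, 0 < ρdg i) → (∀ i, 0 < ρcv i) → Metzler (A ρdg ρcv))
    (hhom : ∀ (c : ℝ), 0 < c → ∀ ρdg ρcv, A (c • ρdg) (c • ρcv) = c • A ρdg ρcv)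
    (hmono : ∀ ρdg ρdg' ρcv, (∀ i, ρdg i ≤ ρdg' i) →
      ∀ i j, A ρdg' ρcv i j ≤ A ρdg ρcv i j)
    (hstab : ∀ ρcv, (∀ i, 0 < ρcv i) → HurwitzStable (A (fun _ => 1) ρcv)) :
    ∀ ρdg ρcv, (∀ i, 0 < ρdg i) → (∀ i, 0 < ρcv i) →
      HurwitzStable (A ρdg ρcv) := by
  intro ρdg ρcv hdg hcv
  rcases isEmpty_or_nonempty (Fin ndg) with hndg | hndg
  · rw [Subsingleton.elim ρdg fun _ => 1]
    exact hstab ρcv hcv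
  set θ := Finset.univ.inf' Finset.univ_nonempty ρdg
  have hθ : 0 < θ := (Finset.lt_inf'_iff _).2 fun i _ => hdg i
  have hθle : ∀ i, θ ≤ ρdg i := fun i => Finset.inf'_le _ (Finset.mem_univ i)
  have hscale : A (fun _ => θ) ρcv = θ • A (fun _ => 1) (θ⁻¹ • ρcv) := by
    rw [← hhom θ hθ, smul_inv_smul₀ hθ.ne']
    congr
    ext; simp
  refine HurwitzStable.of_metzler_of_le (hMetz ρdg ρcv hdg hcv) (hmono _ ρdg ρcv hθle) ?_
  rw [hscale]
  exact (hstab _ fun i => smul_pos (inv_pos.2 hθ) (hcv i)).smul hθ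

theorem stmt15 {d ndg ncv : ℕ}
    (A : (Fin ndg → ℝ) → (Fin ncv → ℝ) → Matrix (Fin d) (Fin d) ℝ)
    (hMetz : ∀ ρdg ρcv, (∀ i, 0 < ρdg i) → (∀ i, 0 < ρcv i) → Metzler (A ρdg ρcv))
    (hadd : ∀ ρdg ρdg' ρcv ρcv',
      A (ρdg + ρdg') (ρcv + ρcv') = A ρdg ρcv + A ρdg' ρcv')
    (hhom : ∀ (c : ℝ), 0 < c → ∀ ρdg ρcv, A (c • ρdg) (c • ρcv) = c • A ρdg ρcv)
    (hmono : ∀ ρdg ρdg' ρcv, (∀ i, ρdg i ≤ ρdg' i) →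
      ∀ i j, A ρdg' ρcv i j ≤ A ρdg ρcv i j)
    (hstab : ∀ ρcv, (∀ i, 0 < ρcv i) → HurwitzStable (A (fun _ => 1) ρcv)) :
    ∀ ρdg ρcv, (∀ i, 0 < ρdg i) → (∀ i, 0 < ρcv i) →
      HurwitzStable (A ρdg ρcv) :=
  stmt15_general A hMetz hhom hmono hstab
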